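/- (PD1/PD2 correctness) Let N ≥ 2 and λ ≥ 1 be natural numbers, let pk be a unit of ZMod (N²) with pk^{λ} = 1, and let σ, r, m be natural numbers with m < N, σ ≡ 0 (mod λ) (i.e. λ ∣ σ) and σ ≡ 1 (mod N²). Write ν for the image of N in ZMod (N²) and set C₁ := (pk : ZMod (N²))^{r} · (1 + (m : ZMod (N²))·ν). Then C₁^{σ} = 1 + m·ν, and consequently ((C₁^{σ}).val − 1) / N = m; i.e., combining the two partial decryptions C₁^{λ₁} · C₁^{λ₂} = C₁^{λ₁+λ₂} recovers the plaintext m. -/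

import Mathlib

/-!
Modulo `N²` the element `ν = N` squares to zero, so the binomial expansion of `(1 + m ν) ^ σ`
stops after the linear term and equals `1 + σ m ν = 1 + m ν`, since `σ ≡ 1 (mod N²)`. The
randomising factor `pk ^ r` dies under the exponent `σ` because `λ ∣ σ` and `pk ^ λ = 1`.
Finally `1 + m N < N²`, so the canonical representative of `1 + m ν` is `1 + m N`, and `L`
returns `m`.
-/

theorem one_add_pow_of_mul_self_eq_zero {R : Type*} [CommRing R] {x : R} (hx : x * x = 0)
    (n : ℕ) : (1 + x) ^ n = 1 + n * x := by
  induction n with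
  | zero => simp
  | succ n ih =>
    rw [pow_succ, ih]
    push_cast
    linear_combination (n : R) * hx

theorem pow_mul_one_add_of_mul_self_eq_zero {R : Type*} [CommRing R] {g x : R} {n : ℕ}
    (hg : g ^ n = 1) (hx : x * x = 0) (hn : (n : R) = 1) : (g * (1 + x)) ^ n = 1 + x := by
  rw [mul_pow, hg, one_mul, one_add_pow_of_mul_self_eq_zero hx, hn, one_mul]

theorem pow_pow_eq_one_of_dvd {M : Type*} [Monoid M] {g : M} {l n : ℕ} (hg : g ^ l = 1)
    (hl : l ∣ n) (r : ℕ) : (g ^ r) ^ n = 1 := by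
  obtain ⟨k, rfl⟩ := hl
  rw [pow_mul, pow_right_comm g r l, hg, one_pow, one_pow]

theorem ZMod.natCast_mul_self_eq_zero (N : ℕ) : (N : ZMod (N ^ 2)) * N = 0 := by
  rw [← Nat.cast_mul, ← sq, ZMod.natCast_self]

theorem ZMod.val_one_add_mul_self {N m : ℕ} (hN : 2 ≤ N) (hm : m < N) :
    (1 + m * N : ZMod (N ^ 2)).val = 1 + m * N := by
  rw [← ZMod.val_natCast_of_lt (n := N ^ 2) (a := 1 + m * N) (by nlinarith)]
  push_cast
  rfl

theorem pctd_pd_correctness_general (N lam : ℕ) (hN : 2 ≤ N)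
    (pk : (ZMod (N ^ 2))ˣ) (hpk : pk ^ lam = 1)
    (σ r m : ℕ) (hm : m < N) (hσ0 : lam ∣ σ) (hσ1 : σ ≡ 1 [MOD N ^ 2])
    (ν : ZMod (N ^ 2)) (hν : ν = (N : ZMod (N ^ 2)))
    (C₁ : ZMod (N ^ 2))
    (hC₁ : C₁ = ((pk : ZMod (N ^ 2)) ^ r) * (1 + (m : ZMod (N ^ 2)) * ν)) :
    C₁ ^ σ = 1 + (m : ZMod (N ^ 2)) * ν ∧ ((C₁ ^ σ).val - 1) / N = m := by
  have hpk' : (pk : ZMod (N ^ 2)) ^ lam = 1 := by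
    rw [← Units.val_pow_eq_pow_val, hpk, Units.val_one]
  have hmν : ((m : ZMod (N ^ 2)) * ν) * ((m : ZMod (N ^ 2)) * ν) = 0 := by
    rw [mul_mul_mul_comm, hν, ZMod.natCast_mul_self_eq_zero, mul_zero]
  have hσ : (σ : ZMod (N ^ 2)) = 1 := by
    exact_mod_cast (ZMod.natCast_eq_natCast_iff σ 1 (N ^ 2)).mpr hσ1
  have hdec : C₁ ^ σ = 1 + (m : ZMod (N ^ 2)) * ν := by
    rw [hC₁]
    exact pow_mul_one_add_of_mul_self_eq_zero (pow_pow_eq_one_of_dvd hpk' hσ0 r) hmν hσ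
  refine ⟨hdec, ?_⟩
  rw [hdec, hν, ZMod.val_one_add_mul_self hN hm, Nat.add_sub_cancel_left,
    Nat.mul_div_cancel _ (by omega)]

theorem pctd_pd_correctness (N lam : ℕ) (hN : 2 ≤ N) (hlam : 1 ≤ lam)
    (pk : (ZMod (N ^ 2))ˣ) (hpk : pk ^ lam = 1)
    (σ r m : ℕ) (hm : m < N) (hσ0 : lam ∣ σ) (hσ1 : σ ≡ 1 [MOD N ^ 2])
    (ν : ZMod (N ^ 2)) (hν : ν = (N : ZMod (N ^ 2)))
    (C₁ : ZMod (N ^ 2))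
    (hC₁ : C₁ = ((pk : ZMod (N ^ 2)) ^ r) * (1 + (m : ZMod (N ^ 2)) * ν)) :
    C₁ ^ σ = 1 + (m : ZMod (N ^ 2)) * ν ∧ ((C₁ ^ σ).val - 1) / N = m :=
  pctd_pd_correctness_general N lam hN pk hpk σ r m hm hσ0 hσ1 ν hν C₁ hC₁
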